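/- arXiv:1711.08986 — 2 statements merged into one kernel-verified Lean document; each statement's English description precedes it below -/
import Mathlib

section
/- For any CRT excursion g and any δ>0, ε>0, there exists a finite set I of indices of strict local minima such that the intervals [a_i,c_i], i ∈ I, are pairwise disjoint, each satisfies c_i − a_i ≤ ε, and the total Lebesgue measure of their union exceeds 1 − δ. -/
open MeasureTheory Set

noncomputable section

/-- `x` is not a one-sided minimum of `g`. -/
def NotOneSidedMin (g : ℝ → ℝ) (x : ℝ) : Prop :=
  x ∈ Set.Ioo (0:ℝ) 1 ∧ ∀ ε > 0, (∃ x₁ ∈ Set.Ioo (x-ε) x, g x₁ < g x) ∧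
    (∃ x₂ ∈ Set.Ioo x (x+ε), g x₂ < g x)

/-- `b` is an inner local minimum of `g`. -/
def IsInnerLocalMin (g : ℝ → ℝ) (b : ℝ) : Prop :=
  b ∈ Set.Ioo (0:ℝ) 1 ∧ ∃ ε > 0, ∀ x ∈ Set.Ioo (b-ε) (b+ε), g b ≤ g x

/-- `b` is a strict (inner) local minimum of `g`. -/
def IsStrictLocalMin (g : ℝ → ℝ) (b : ℝ) : Prop :=
  b ∈ Set.Ioo (0:ℝ) 1 ∧ ∃ ε > 0, ∀ x ∈ Set.Ioo (b-ε) (b+ε), x ≠ b → g b < g x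

/-- A CRT excursion. -/
structure IsCRT (g : ℝ → ℝ) : Prop where
  cont : ContinuousOn g (Set.Icc 0 1)
  nonneg : ∀ t ∈ Set.Icc (0:ℝ) 1, 0 ≤ g t
  pos : ∀ t ∈ Set.Ioo (0:ℝ) 1, 0 < g t
  zero0 : g 0 = 0
  zero1 : g 1 = 0
  dense_min : ∀ x ∈ Set.Icc (0:ℝ) 1, x ∈ closure {b | IsInnerLocalMin g b}
  distinct : ∀ b b', IsInnerLocalMin g b → IsInnerLocalMin g b' → g b = g b' → b = b'
  leaves_full : volume {x | NotOneSidedMin g x} = 1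

/-- `β` is the unique minimum point of `g` on `[x,y]`, lies in `(x,y)`,
and is a strict local minimum: the most recent common ancestor of `x < y`. -/
def IsMrca (g : ℝ → ℝ) (β x y : ℝ) : Prop :=
  x < y ∧ β ∈ Set.Ioo x y ∧ IsStrictLocalMin g β ∧
    (∀ t ∈ Set.Icc x y, g β ≤ g t) ∧ (∀ t ∈ Set.Icc x y, g t = g β → t = β)

/-- `x` and `y` are `g`-comparable. -/
def GComparable (g : ℝ → ℝ) (x y : ℝ) : Prop :=
  ∃ β, IsMrca g β (min x y) (max x y)

/-- `b` enumerates (injectively) the strict local minima of `g`. -/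
def IsEnum (g : ℝ → ℝ) (b : ℕ → ℝ) : Prop :=
  Function.Injective b ∧ ∀ β, IsStrictLocalMin g β ↔ ∃ i, b i = β

/-- The sign-shuffled comparison relation `u ⊲ v` : if the mrca of `u,v` carries
sign `⊕` (`true`) then the smaller goes first, otherwise the bigger goes first. -/
def Tri (g : ℝ → ℝ) (b : ℕ → ℝ) (s : ℕ → Bool) (u v : ℝ) : Prop :=
  ∃ i, (IsMrca g (b i) u v ∧ s i = true) ∨ (IsMrca g (b i) v u ∧ s i = false)

/-- The measure-preserving function `φ_{g,s}`. -/
def phi (g : ℝ → ℝ) (b : ℕ → ℝ) (s : ℕ → Bool) (t : ℝ) : ℝ :=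
  (volume {u ∈ Set.Icc (0:ℝ) 1 | Tri g b s u t}).toReal

def aPt (g : ℝ → ℝ) (β : ℝ) : ℝ := sSup {t | t < β ∧ g t = g β}
def cPt (g : ℝ → ℝ) (β : ℝ) : ℝ := sInf {t | β < t ∧ g t = g β}

def aI (g : ℝ → ℝ) (b : ℕ → ℝ) (i : ℕ) : ℝ := aPt g (b i)
def cI (g : ℝ → ℝ) (b : ℕ → ℝ) (i : ℕ) : ℝ := cPt g (b i)
def aI' (g : ℝ → ℝ) (b : ℕ → ℝ) (s : ℕ → Bool) (i : ℕ) : ℝ := phi g b s (aI g b i)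
def cI' (g : ℝ → ℝ) (b : ℕ → ℝ) (s : ℕ → Bool) (i : ℕ) : ℝ :=
  aI' g b s i + (cI g b i - aI g b i)
def bI' (g : ℝ → ℝ) (b : ℕ → ℝ) (s : ℕ → Bool) (i : ℕ) : ℝ :=
  aI' g b s i + (if s i then b i - aI g b i else cI g b i - b i)

/-- The permuton `μ_{g,s} = (Id, φ_{g,s})_* Leb`. -/
def permuton (g : ℝ → ℝ) (b : ℕ → ℝ) (s : ℕ → Bool) : Measure (ℝ × ℝ) :=
  Measure.map (fun t => (t, phi g b s t)) (volume.restrict (Set.Icc 0 1))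

/-- Property (A) of a signed excursion. -/
def PropA (g : ℝ → ℝ) (b : ℕ → ℝ) (s : ℕ → Bool) : Prop :=
  ∀ i j, i ≠ j →
    Set.Icc (aI' g b s j) (cI' g b s j) ⊆ Set.Icc (aI' g b s i) (cI' g b s i) →
    (∀ y ∈ Set.Icc (g (b i)) (g (b j)),
      y ∈ closure {h | ∃ l, h = g (b l) ∧
        Set.Icc (aI' g b s l) (cI' g b s l) ⊆ Set.Icc (aI' g b s i) (cI' g b s i) ∧
        Set.Icc (aI' g b s j) (cI' g b s j) ⊆ Set.Icc (bI' g b s l) (cI' g b s l)}) ∧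
    (∀ y ∈ Set.Icc (g (b i)) (g (b j)),
      y ∈ closure {h | ∃ l, h = g (b l) ∧
        Set.Icc (aI' g b s l) (cI' g b s l) ⊆ Set.Icc (aI' g b s i) (cI' g b s i) ∧
        Set.Icc (aI' g b s j) (cI' g b s j) ⊆ Set.Icc (aI' g b s l) (bI' g b s l)})

/-- The shuffled excursion `f_{g,s}`. -/
def fShuffle (g : ℝ → ℝ) (b : ℕ → ℝ) (s : ℕ → Bool) (t : ℝ) : ℝ :=
  ⨆ i, Set.indicator (Set.Icc (aI' g b s i) (cI' g b s i)) (fun _ => g (b i)) t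

/-- Topological support of a measure. -/
def mSupport {α : Type*} [TopologicalSpace α] [MeasurableSpace α] (μ : Measure α) : Set α :=
  {x | ∀ U : Set α, IsOpen U → x ∈ U → μ U ≠ 0}

-- ### helpers

variable {g : ℝ → ℝ}

lemma myContAt (hg : IsCRT g) {t : ℝ} (ht : t ∈ Set.Ioo (0:ℝ) 1) : ContinuousAt g t :=
  hg.cont.continuousAt (Icc_mem_nhds ht.1 ht.2)

lemma gcont (hg : IsCRT g) {u v : ℝ} (hu : 0 ≤ u) (hv : v ≤ 1) : ContinuousOn g (Icc u v) :=
  hg.cont.mono (Icc_subset_Icc hu hv)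

lemma ev_gt (hg : IsCRT g) {t h : ℝ} (ht : t ∈ Set.Ioo (0:ℝ) 1) (hgt : h < g t) :
    ∃ d > 0, ∀ s, t - d < s → s < t + d → h < g s := by
  have H := (myContAt hg ht).eventually (eventually_gt_nhds hgt)
  rw [Metric.eventually_nhds_iff] at H
  obtain ⟨d, hd, H⟩ := H
  exact ⟨d, hd, fun s h1 h2 => H (by rw [Real.dist_eq, abs_lt]; constructor <;> linarith)⟩

lemma ev_lt (hg : IsCRT g) {t h : ℝ} (ht : t ∈ Set.Ioo (0:ℝ) 1) (hgt : g t < h) :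
    ∃ d > 0, ∀ s, t - d < s → s < t + d → g s < h := by
  have H := (myContAt hg ht).eventually (eventually_lt_nhds hgt)
  rw [Metric.eventually_nhds_iff] at H
  obtain ⟨d, hd, H⟩ := H
  exact ⟨d, hd, fun s h1 h2 => H (by rw [Real.dist_eq, abs_lt]; constructor <;> linarith)⟩

lemma strict_inner {β : ℝ} (H : IsStrictLocalMin g β) : IsInnerLocalMin g β := by
  obtain ⟨h1, ε, hε, h2⟩ := H
  refine ⟨h1, ε, hε, fun x hx => ?_⟩
  by_cases hxb : x = β
  · rw [hxb]
  · exact (h2 x hx hxb).le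

lemma val_inj (hg : IsCRT g) {β β' : ℝ} (H : IsStrictLocalMin g β) (H' : IsStrictLocalMin g β')
    (hv : g β = g β') : β = β' :=
  hg.distinct _ _ (strict_inner H) (strict_inner H') hv

lemma inner_strict (hg : IsCRT g) {β : ℝ} (H : IsInnerLocalMin g β) : IsStrictLocalMin g β := by
  obtain ⟨⟨hβ0, hβ1⟩, ε₀, hε₀, hmin⟩ := H
  have hε₁ : 0 < min ε₀ (min β (1 - β)) := lt_min hε₀ (lt_min hβ0 (by linarith))
  have hε₁a : min ε₀ (min β (1 - β)) ≤ ε₀ := min_le_left _ _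
  have hε₁b : min ε₀ (min β (1 - β)) ≤ β := (min_le_right _ _).trans (min_le_left _ _)
  have hε₁c : min ε₀ (min β (1 - β)) ≤ 1 - β := (min_le_right _ _).trans (min_le_right _ _)
  refine ⟨⟨hβ0, hβ1⟩, min ε₀ (min β (1 - β)), hε₁, fun x hx hxb => ?_⟩
  obtain ⟨hx1, hx2⟩ := hx
  have hle : g β ≤ g x := hmin x ⟨by linarith, by linarith⟩
  rcases lt_or_eq_of_le hle with h | h
  · exact h
  · exfalso
    have hr : |x - β| < ε₀ := by rw [abs_lt]; constructor <;> linarith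
    have hr1 := abs_lt.mp hr
    have hxmin : IsInnerLocalMin g x := by
      refine ⟨⟨by linarith, by linarith⟩, ε₀ - |x - β|, by linarith, fun y hy => ?_⟩
      obtain ⟨hy1, hy2⟩ := hy
      have hy3 : β - ε₀ < y := by
        have := le_abs_self (x - β); have := neg_abs_le (x - β); linarith
      have hy4 : y < β + ε₀ := by
        have := le_abs_self (x - β); have := neg_abs_le (x - β); linarith
      rw [← h]
      exact hmin y ⟨hy3, hy4⟩
    exact hxb (hg.distinct x β hxmin ⟨⟨hβ0, hβ1⟩, ε₀, hε₀, hmin⟩ h.symm)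

lemma key (hg : IsCRT g) {β : ℝ} (H : IsStrictLocalMin g β) :
    0 < aPt g β ∧ aPt g β < β ∧ β < cPt g β ∧ cPt g β < 1 ∧
    g (aPt g β) = g β ∧ g (cPt g β) = g β ∧
    ∀ t ∈ Set.Ioo (aPt g β) (cPt g β), t ≠ β → g β < g t := by
  obtain ⟨⟨hβ0, hβ1⟩, ε₀, hε₀, hst⟩ := H
  set ε₁ := min ε₀ (min β (1 - β)) with hε₁def
  have hε₁ : 0 < ε₁ := lt_min hε₀ (lt_min hβ0 (by linarith))
  have hε₁a : ε₁ ≤ ε₀ := min_le_left _ _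
  have hε₁b : ε₁ ≤ β := (min_le_right _ _).trans (min_le_left _ _)
  have hε₁c : ε₁ ≤ 1 - β := (min_le_right _ _).trans (min_le_right _ _)
  have hst₁ : ∀ t, β - ε₁ < t → t < β + ε₁ → t ≠ β → g β < g t := fun t h1 h2 h3 =>
    hst t ⟨by linarith, by linarith⟩ h3
  have hβpos : 0 < g β := hg.pos β ⟨hβ0, hβ1⟩
  -- left hit
  have hp0 : 0 < β - ε₁/2 := by linarith
  have hgp : g β < g (β - ε₁/2) := hst₁ _ (by linarith) (by linarith) (by linarith)
  have hIVT : g β ∈ g '' Icc 0 (β - ε₁/2) := by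
    apply intermediate_value_Icc hp0.le (gcont hg le_rfl (by linarith))
    rw [hg.zero0]; exact ⟨hβpos.le, hgp.le⟩
  obtain ⟨t₀, ht₀mem, ht₀⟩ := hIVT
  have ht₀0 : 0 < t₀ := by
    rcases lt_or_eq_of_le ht₀mem.1 with h | h
    · exact h
    · exfalso; rw [← h, hg.zero0] at ht₀; linarith
  have ht₀β : t₀ < β := by linarith [ht₀mem.2]
  have hSbdd : BddAbove {t | t < β ∧ g t = g β} := ⟨β, fun s hs => hs.1.le⟩
  have hSne : Set.Nonempty {t | t < β ∧ g t = g β} := ⟨t₀, ht₀β, ht₀⟩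
  have hSub : ∀ s ∈ {t | t < β ∧ g t = g β}, s ≤ β - ε₁ := by
    intro s hs
    by_contra hcon
    push_neg at hcon
    exact absurd hs.2.symm (ne_of_lt (hst₁ s hcon (by linarith [hs.1]) (ne_of_lt hs.1)))
  have ha_le : aPt g β ≤ β - ε₁ := csSup_le hSne hSub
  have ha_ge : t₀ ≤ aPt g β := le_csSup hSbdd ⟨ht₀β, ht₀⟩
  have haS : aPt g β < β ∧ g (aPt g β) = g β := by
    have hCc : IsClosed (Icc t₀ (β - ε₁) ∩ g ⁻¹' {g β}) :=
      (gcont hg ht₀0.le (by linarith)).preimage_isClosed_of_isClosed isClosed_Icc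
        isClosed_singleton
    have hCcomp : IsCompact (Icc t₀ (β - ε₁) ∩ g ⁻¹' {g β}) :=
      isCompact_Icc.of_isClosed_subset hCc inter_subset_left
    have ht₀C : t₀ ∈ Icc t₀ (β - ε₁) ∩ g ⁻¹' {g β} :=
      ⟨⟨le_rfl, hSub t₀ ⟨ht₀β, ht₀⟩⟩, ht₀⟩
    have heq : aPt g β = sSup (Icc t₀ (β - ε₁) ∩ g ⁻¹' {g β}) := by
      apply le_antisymm
      · apply csSup_le hSne
        intro s hs
        rcases le_or_gt s t₀ with h | h
        · exact h.trans (le_csSup hCcomp.bddAbove ht₀C)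
        · exact le_csSup hCcomp.bddAbove ⟨⟨h.le, hSub s hs⟩, hs.2⟩
      · apply csSup_le ⟨t₀, ht₀C⟩
        intro s hs
        exact le_csSup hSbdd ⟨by linarith [hs.1.2], hs.2⟩
    have hmem := hCcomp.sSup_mem ⟨t₀, ht₀C⟩
    rw [← heq] at hmem
    exact ⟨by linarith [hmem.1.2], hmem.2⟩
  obtain ⟨haβ, hagb⟩ := haS
  have ha0 : 0 < aPt g β := lt_of_lt_of_le ht₀0 ha_ge
  have hleft : ∀ t, aPt g β < t → t < β → g β < g t := by
    intro t hta htβ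
    have hne : g t ≠ g β := fun h => absurd (le_csSup hSbdd ⟨htβ, h⟩) (not_le.mpr hta)
    rcases lt_or_gt_of_ne hne with hlt | hgt
    · exfalso
      have hm0 : 0 < min ε₁ (β - t) := lt_min hε₁ (by linarith)
      have hma : min ε₁ (β - t) ≤ ε₁ := min_le_left _ _
      have hmb : min ε₁ (β - t) ≤ β - t := min_le_right _ _
      have hq : g β < g (β - min ε₁ (β - t)/2) := hst₁ _ (by linarith) (by linarith) (by linarith)
      have hIVT2 : g β ∈ g '' Icc t (β - min ε₁ (β - t)/2) := by
        apply intermediate_value_Icc (by linarith) (gcont hg (by linarith) (by linarith))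
        exact ⟨hlt.le, hq.le⟩
      obtain ⟨s, hsmem, hs⟩ := hIVT2
      have : s ≤ aPt g β := le_csSup hSbdd ⟨by linarith [hsmem.2], hs⟩
      linarith [hsmem.1]
    · exact hgt
  -- right hit
  have hp1 : β + ε₁/2 < 1 := by linarith
  have hgp' : g β < g (β + ε₁/2) := hst₁ _ (by linarith) (by linarith) (by linarith)
  have hIVT' : g β ∈ g '' Icc (β + ε₁/2) 1 := by
    apply intermediate_value_Icc' hp1.le (gcont hg (by linarith) le_rfl)
    rw [hg.zero1]; exact ⟨hβpos.le, hgp'.le⟩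
  obtain ⟨t₁, ht₁mem, ht₁⟩ := hIVT'
  have ht₁1 : t₁ < 1 := by
    rcases lt_or_eq_of_le ht₁mem.2 with h | h
    · exact h
    · exfalso; rw [h, hg.zero1] at ht₁; linarith
  have ht₁β : β < t₁ := by linarith [ht₁mem.1]
  have hTbdd : BddBelow {t | β < t ∧ g t = g β} := ⟨β, fun s hs => hs.1.le⟩
  have hTne : Set.Nonempty {t | β < t ∧ g t = g β} := ⟨t₁, ht₁β, ht₁⟩
  have hTub : ∀ s ∈ {t | β < t ∧ g t = g β}, β + ε₁ ≤ s := by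
    intro s hs
    by_contra hcon
    push_neg at hcon
    exact absurd hs.2.symm (ne_of_lt (hst₁ s (by linarith [hs.1]) hcon (ne_of_gt hs.1)))
  have hc_ge : β + ε₁ ≤ cPt g β := le_csInf hTne hTub
  have hc_le : cPt g β ≤ t₁ := csInf_le hTbdd ⟨ht₁β, ht₁⟩
  have hcT : β < cPt g β ∧ g (cPt g β) = g β := by
    have hCc : IsClosed (Icc (β + ε₁) t₁ ∩ g ⁻¹' {g β}) :=
      (gcont hg (by linarith) ht₁1.le).preimage_isClosed_of_isClosed isClosed_Icc
        isClosed_singleton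
    have hCcomp : IsCompact (Icc (β + ε₁) t₁ ∩ g ⁻¹' {g β}) :=
      isCompact_Icc.of_isClosed_subset hCc inter_subset_left
    have ht₁C : t₁ ∈ Icc (β + ε₁) t₁ ∩ g ⁻¹' {g β} :=
      ⟨⟨hTub t₁ ⟨ht₁β, ht₁⟩, le_rfl⟩, ht₁⟩
    have heq : cPt g β = sInf (Icc (β + ε₁) t₁ ∩ g ⁻¹' {g β}) := by
      apply le_antisymm
      · apply le_csInf ⟨t₁, ht₁C⟩
        intro s hs
        exact csInf_le hTbdd ⟨by linarith [hs.1.1], hs.2⟩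
      · apply le_csInf hTne
        intro s hs
        rcases le_or_gt t₁ s with h | h
        · exact (csInf_le hCcomp.bddBelow ht₁C).trans h
        · exact csInf_le hCcomp.bddBelow ⟨⟨hTub s hs, h.le⟩, hs.2⟩
    have hmem := hCcomp.sInf_mem ⟨t₁, ht₁C⟩
    rw [← heq] at hmem
    exact ⟨by linarith [hmem.1.1], hmem.2⟩
  obtain ⟨hβc, hcgb⟩ := hcT
  have hc1 : cPt g β < 1 := lt_of_le_of_lt hc_le ht₁1
  have hright : ∀ t, β < t → t < cPt g β → g β < g t := by
    intro t htβ htc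
    have hne : g t ≠ g β := fun h => absurd (csInf_le hTbdd ⟨htβ, h⟩) (not_le.mpr htc)
    rcases lt_or_gt_of_ne hne with hlt | hgt
    · exfalso
      have hm0 : 0 < min ε₁ (t - β) := lt_min hε₁ (by linarith)
      have hma : min ε₁ (t - β) ≤ ε₁ := min_le_left _ _
      have hmb : min ε₁ (t - β) ≤ t - β := min_le_right _ _
      have hq : g β < g (β + min ε₁ (t - β)/2) := hst₁ _ (by linarith) (by linarith) (by linarith)
      have hIVT2 : g β ∈ g '' Icc (β + min ε₁ (t - β)/2) t := by
        apply intermediate_value_Icc' (by linarith) (gcont hg (by linarith) (by linarith))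
        exact ⟨hlt.le, hq.le⟩
      obtain ⟨s, hsmem, hs⟩ := hIVT2
      have : cPt g β ≤ s := csInf_le hTbdd ⟨by linarith [hsmem.1], hs⟩
      linarith [hsmem.2]
    · exact hgt
  refine ⟨ha0, haβ, hβc, hc1, hagb, hcgb, ?_⟩
  rintro t ⟨ht1, ht2⟩ htβ
  rcases lt_trichotomy t β with h | h | h
  · exact hleft t ht1 h
  · exact absurd h htβ
  · exact hright t h ht2
lemma supHit (hg : IsCRT g) {x h w : ℝ} (hx : x ∈ Set.Ioo (0:ℝ) 1) (hw0 : 0 < w) (hwx : w < x)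
    (hwh : g w ≤ h) (hhx : h < g x) :
    w ≤ sSup {s | s < x ∧ g s ≤ h} ∧ sSup {s | s < x ∧ g s ≤ h} < x ∧
    g (sSup {s | s < x ∧ g s ≤ h}) = h ∧
    ∀ t, sSup {s | s < x ∧ g s ≤ h} < t → t < x → h < g t := by
  set α := sSup {s | s < x ∧ g s ≤ h} with hαdef
  have hbdd : BddAbove {s | s < x ∧ g s ≤ h} := ⟨x, fun s hs => hs.1.le⟩
  have hne : Set.Nonempty {s | s < x ∧ g s ≤ h} := ⟨w, hwx, hwh⟩
  have hge : w ≤ α := le_csSup hbdd ⟨hwx, hwh⟩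
  obtain ⟨d, hd, hD⟩ := ev_gt hg hx hhx
  have hub : ∀ s ∈ {s | s < x ∧ g s ≤ h}, s ≤ x - d := by
    intro s hs
    by_contra hcon
    push_neg at hcon
    exact absurd hs.2 (not_le.mpr (hD s (by linarith) (by linarith [hs.1])))
  have hlt : α < x := lt_of_le_of_lt (csSup_le hne hub) (by linarith)
  have hα01 : α ∈ Set.Ioo (0:ℝ) 1 := ⟨lt_of_lt_of_le hw0 hge, lt_trans hlt hx.2⟩
  have hnotin : ∀ t, α < t → t < x → h < g t := by
    intro t h1 h2
    by_contra hcon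
    push_neg at hcon
    exact absurd (le_csSup hbdd ⟨h2, hcon⟩) (not_le.mpr h1)
  have hgeh : h ≤ g α := by
    by_contra hcon
    push_neg at hcon
    obtain ⟨d', hd', hD'⟩ := ev_lt hg hα01 hcon
    have hs1 : α < min (α + d'/2) ((α + x)/2) := lt_min (by linarith) (by linarith)
    have hs2 : min (α + d'/2) ((α + x)/2) < x := lt_of_le_of_lt (min_le_right _ _) (by linarith)
    have hs3 : min (α + d'/2) ((α + x)/2) < α + d' :=
      lt_of_le_of_lt (min_le_left _ _) (by linarith)
    have hgs : g (min (α + d'/2) ((α + x)/2)) < h := hD' _ (by linarith) hs3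
    exact absurd (le_csSup hbdd ⟨hs2, hgs.le⟩) (not_le.mpr hs1)
  have hleh : g α ≤ h := by
    by_contra hcon
    push_neg at hcon
    obtain ⟨d', hd', hD'⟩ := ev_gt hg hα01 hcon
    have hub2 : ∀ s ∈ {s | s < x ∧ g s ≤ h}, s ≤ α - d' := by
      intro s hs
      by_contra hcon2
      push_neg at hcon2
      have hsle : s ≤ α := le_csSup hbdd hs
      exact absurd hs.2 (not_le.mpr (hD' s (by linarith) (by linarith)))
    have := csSup_le hne hub2
    linarith
  exact ⟨hge, hlt, le_antisymm hleh hgeh, hnotin⟩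

lemma infHit (hg : IsCRT g) {x h w : ℝ} (hx : x ∈ Set.Ioo (0:ℝ) 1) (hw1 : w < 1) (hxw : x < w)
    (hwh : g w ≤ h) (hhx : h < g x) :
    sInf {s | x < s ∧ g s ≤ h} ≤ w ∧ x < sInf {s | x < s ∧ g s ≤ h} ∧
    g (sInf {s | x < s ∧ g s ≤ h}) = h ∧
    ∀ t, x < t → t < sInf {s | x < s ∧ g s ≤ h} → h < g t := by
  set γ := sInf {s | x < s ∧ g s ≤ h} with hγdef
  have hbdd : BddBelow {s | x < s ∧ g s ≤ h} := ⟨x, fun s hs => hs.1.le⟩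
  have hne : Set.Nonempty {s | x < s ∧ g s ≤ h} := ⟨w, hxw, hwh⟩
  have hle : γ ≤ w := csInf_le hbdd ⟨hxw, hwh⟩
  obtain ⟨d, hd, hD⟩ := ev_gt hg hx hhx
  have hlb : ∀ s ∈ {s | x < s ∧ g s ≤ h}, x + d ≤ s := by
    intro s hs
    by_contra hcon
    push_neg at hcon
    exact absurd hs.2 (not_le.mpr (hD s (by linarith [hs.1]) (by linarith)))
  have hgt : x < γ := lt_of_lt_of_le (by linarith) (le_csInf hne hlb)
  have hγ01 : γ ∈ Set.Ioo (0:ℝ) 1 := ⟨lt_trans hx.1 hgt, lt_of_le_of_lt hle hw1⟩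
  have hnotin : ∀ t, x < t → t < γ → h < g t := by
    intro t h1 h2
    by_contra hcon
    push_neg at hcon
    exact absurd (csInf_le hbdd ⟨h1, hcon⟩) (not_le.mpr h2)
  have hgeh : h ≤ g γ := by
    by_contra hcon
    push_neg at hcon
    obtain ⟨d', hd', hD'⟩ := ev_lt hg hγ01 hcon
    have hs1 : max (γ - d'/2) ((x + γ)/2) < γ := max_lt (by linarith) (by linarith)
    have hs2 : x < max (γ - d'/2) ((x + γ)/2) := lt_of_lt_of_le (by linarith) (le_max_right _ _)
    have hs3 : γ - d' < max (γ - d'/2) ((x + γ)/2) :=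
      lt_of_lt_of_le (by linarith) (le_max_left _ _)
    have hgs : g (max (γ - d'/2) ((x + γ)/2)) < h := hD' _ hs3 (by linarith)
    exact absurd (csInf_le hbdd ⟨hs2, hgs.le⟩) (not_le.mpr hs1)
  have hleh : g γ ≤ h := by
    by_contra hcon
    push_neg at hcon
    obtain ⟨d', hd', hD'⟩ := ev_gt hg hγ01 hcon
    have hlb2 : ∀ s ∈ {s | x < s ∧ g s ≤ h}, γ + d' ≤ s := by
      intro s hs
      by_contra hcon2
      push_neg at hcon2
      have hsle : γ ≤ s := csInf_le hbdd hs
      exact absurd hs.2 (not_le.mpr (hD' s (by linarith) (by linarith)))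
    have := le_csInf hne hlb2
    linarith
  exact ⟨hle, hgt, le_antisymm hleh hgeh, hnotin⟩

lemma leaf_dense (hg : IsCRT g) {u v : ℝ} (h0 : 0 ≤ u) (huv : u < v) (h1 : v ≤ 1) :
    ∃ m ∈ Set.Ioo u v, NotOneSidedMin g m := by
  by_contra hcon
  push_neg at hcon
  have hsub : {x | NotOneSidedMin g x} ⊆ Ioo 0 1 \ Ioo u v :=
    fun x hx => ⟨hx.1, fun hmem => hcon x hmem hx⟩
  have hIoo : Ioo u v ⊆ Ioo (0:ℝ) 1 :=
    fun s hs => ⟨lt_of_le_of_lt h0 hs.1, lt_of_lt_of_le hs.2 h1⟩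
  have h2 := measure_mono (μ := volume) hsub
  rw [hg.leaves_full, measure_diff hIoo measurableSet_Ioo.nullMeasurableSet
    (by rw [Real.volume_Ioo]; exact ENNReal.ofReal_ne_top), Real.volume_Ioo, Real.volume_Ioo] at h2
  have hlt : ENNReal.ofReal (1 - 0) - ENNReal.ofReal (v - u) < 1 := by
    rw [sub_zero, ENNReal.ofReal_one]
    exact ENNReal.sub_lt_self ENNReal.one_ne_top one_ne_zero
      (fun hz => by rw [ENNReal.ofReal_eq_zero] at hz; linarith)
  exact absurd h2 (not_le.mpr hlt)
lemma cover (hg : IsCRT g) {x : ℝ} (hx : NotOneSidedMin g x) {ε : ℝ} (hε : 0 < ε) :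
    ∃ β, IsStrictLocalMin g β ∧ aPt g β ≤ x ∧ x ≤ cPt g β ∧ cPt g β - aPt g β ≤ ε := by
  obtain ⟨⟨hx0, hx1⟩, hleaf⟩ := hx
  set ε' := min (ε/4) (min x (1 - x)) with hε'def
  have hε'0 : 0 < ε' := lt_min (by linarith) (lt_min hx0 (by linarith))
  have hε'a : ε' ≤ ε/4 := min_le_left _ _
  have hε'b : ε' ≤ x := (min_le_right _ _).trans (min_le_left _ _)
  have hε'c : ε' ≤ 1 - x := (min_le_right _ _).trans (min_le_right _ _)
  obtain ⟨⟨x₁, hx₁mem, hx₁v⟩, ⟨x₂, hx₂mem, hx₂v⟩⟩ := hleaf ε' hε'0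
  obtain ⟨hx₁a, hx₁b⟩ := hx₁mem
  obtain ⟨hx₂a, hx₂b⟩ := hx₂mem
  have hx₁0 : 0 < x₁ := by linarith
  have hx₂1 : x₂ < 1 := by linarith
  have hMx : max (g x₁) (g x₂) < g x := max_lt hx₁v hx₂v
  set M := max (g x₁) (g x₂) with hMdef
  set h' := M + (g x - M)/3 with hh'def
  set hh := M + 2*(g x - M)/3 with hhhdef
  have hMh' : M < h' := by rw [hh'def]; linarith
  have h'h : h' < hh := by rw [hh'def, hhhdef]; linarith
  have hhx' : hh < g x := by rw [hhhdef]; linarith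
  have hgx₁h : g x₁ ≤ h' := le_trans (le_max_left _ _) hMh'.le
  have hgx₂h : g x₂ ≤ h' := le_trans (le_max_right _ _) hMh'.le
  -- α (level hh) and α' (level h')
  obtain ⟨hα1, hα2, hα3, hα4⟩ := supHit hg ⟨hx0, hx1⟩ hx₁0 hx₁b (le_trans hgx₁h h'h.le) hhx'
  obtain ⟨hα'1, hα'2, hα'3, hα'4⟩ := supHit hg ⟨hx0, hx1⟩ hx₁0 hx₁b hgx₁h (by linarith)
  set α := sSup {s | s < x ∧ g s ≤ hh} with hαdef
  set α' := sSup {s | s < x ∧ g s ≤ h'} with hα'def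
  have hαα' : α' < α := by
    have hle : α' ≤ α := csSup_le_csSup ⟨x, fun s hs => hs.1.le⟩ ⟨x₁, hx₁b, hgx₁h⟩
      (fun s hs => ⟨hs.1, hs.2.trans h'h.le⟩)
    rcases lt_or_eq_of_le hle with hl | he
    · exact hl
    · exfalso; rw [he, hα3] at hα'3; linarith
  -- γ (level hh) and γ' (level h')
  obtain ⟨hγ1, hγ2, hγ3, hγ4⟩ := infHit hg ⟨hx0, hx1⟩ hx₂1 hx₂a (le_trans hgx₂h h'h.le) hhx'
  obtain ⟨hγ'1, hγ'2, hγ'3, hγ'4⟩ := infHit hg ⟨hx0, hx1⟩ hx₂1 hx₂a hgx₂h (by linarith)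
  set γ := sInf {s | x < s ∧ g s ≤ hh} with hγdef
  set γ' := sInf {s | x < s ∧ g s ≤ h'} with hγ'def
  have hγγ' : γ < γ' := by
    have hle : γ ≤ γ' := csInf_le_csInf ⟨x, fun s hs => hs.1.le⟩ ⟨x₂, hx₂a, hgx₂h⟩
      (fun s hs => ⟨hs.1, hs.2.trans h'h.le⟩)
    rcases lt_or_eq_of_le hle with hl | he
    · exact hl
    · exfalso; rw [← he, hγ3] at hγ'3; linarith
  -- g > h' on (α', γ')
  have hgt' : ∀ t, α' < t → t < γ' → h' < g t := by
    intro t h1 h2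
    rcases lt_trichotomy t x with h | h | h
    · exact hα'4 t h1 h
    · rw [h]; linarith
    · exact hγ'4 t h h2
  -- leaf m₁ ∈ (α', α)
  obtain ⟨m₁, hm₁mem, hm₁leaf⟩ := leaf_dense hg (by linarith : (0:ℝ) ≤ α') hαα' (by linarith)
  obtain ⟨hm₁a, hm₁b⟩ := hm₁mem
  have hm₁γ : m₁ < γ := by linarith
  -- minimum over [m₁, γ]
  obtain ⟨β₀, hβ₀mem, hβ₀min'⟩ := isCompact_Icc.exists_isMinOn (nonempty_Icc.mpr hm₁γ.le)
    (gcont hg (by linarith) (by linarith))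
  have hβ₀min : ∀ y ∈ Icc m₁ γ, g β₀ ≤ g y := fun y hy => hβ₀min' hy
  -- g β₀ < g m₁ since m₁ is a leaf
  have hm₁min : g β₀ < g m₁ := by
    obtain ⟨_, ⟨s, hsmem, hsv⟩⟩ := hm₁leaf.2 (γ - m₁) (by linarith)
    obtain ⟨hs1, hs2⟩ := hsmem
    have hs3 : s < γ := by linarith
    exact lt_of_le_of_lt (hβ₀min s ⟨hs1.le, hs3.le⟩) hsv
  have hαIcc : α ∈ Icc m₁ γ := ⟨hm₁b.le, by linarith⟩
  have hv₀h : g β₀ ≤ hh := le_of_le_of_eq (hβ₀min α hαIcc) hα3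
  -- interior minimizer β
  have hexβ : ∃ β, β ∈ Ioo m₁ γ ∧ ∀ y ∈ Icc m₁ γ, g β ≤ g y := by
    rcases lt_or_eq_of_le hv₀h with hl | he
    · refine ⟨β₀, ⟨?_, ?_⟩, hβ₀min⟩
      · rcases lt_or_eq_of_le hβ₀mem.1 with h | h
        · exact h
        · exfalso; rw [← h] at hm₁min; linarith
      · rcases lt_or_eq_of_le hβ₀mem.2 with h | h
        · exact h
        · exfalso; rw [h, hγ3] at hl; linarith
    · exact ⟨α, ⟨hm₁b, by linarith⟩, fun y hy => by rw [hα3, ← he]; exact hβ₀min y hy⟩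
  obtain ⟨β, ⟨hβa, hβb⟩, hβmin⟩ := hexβ
  have hβ01 : β ∈ Set.Ioo (0:ℝ) 1 := ⟨by linarith, by linarith⟩
  have hvh : g β ≤ hh := le_of_le_of_eq (hβmin α hαIcc) hα3
  have hvh' : h' < g β := hgt' β (by linarith) (by linarith)
  -- β inner ⇒ strict local min
  have hβinner : IsInnerLocalMin g β := by
    refine ⟨hβ01, min (β - m₁) (γ - β), lt_min (by linarith) (by linarith), fun y hy => ?_⟩
    obtain ⟨hy1, hy2⟩ := hy
    have h1 := min_le_left (β - m₁) (γ - β)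
    have h2 := min_le_right (β - m₁) (γ - β)
    exact hβmin y ⟨by linarith, by linarith⟩
  have hβstrict := inner_strict hg hβinner
  -- uniqueness of the minimizer inside (m₁, γ)
  have huniq : ∀ t, m₁ < t → t < γ → t ≠ β → g β < g t := by
    intro t h1 h2 h3
    rcases lt_or_eq_of_le (hβmin t ⟨h1.le, h2.le⟩) with h | h
    · exact h
    · exfalso
      have htinner : IsInnerLocalMin g t := by
        refine ⟨⟨by linarith, by linarith⟩, min (t - m₁) (γ - t),
          lt_min (by linarith) (by linarith), fun y hy => ?_⟩
        obtain ⟨hy1, hy2⟩ := hy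
        have hA := min_le_left (t - m₁) (γ - t)
        have hB := min_le_right (t - m₁) (γ - t)
        rw [← h]
        exact hβmin y ⟨by linarith, by linarith⟩
      exact h3 (hg.distinct t β htinner hβinner h.symm)
  -- left hit between α' and m₁
  have hgm₁β : g β ≤ g m₁ := hβmin m₁ ⟨le_rfl, hm₁γ.le⟩
  obtain ⟨r, hrmem, hrv⟩ : ∃ r ∈ Icc α' m₁, g r = g β := by
    apply intermediate_value_Icc hm₁a.le (gcont hg (by linarith) (by linarith))
    rw [hα'3]; exact ⟨hvh'.le, hgm₁β⟩
  have hSbdd : BddAbove {t | t < β ∧ g t = g β} := ⟨β, fun s hs => hs.1.le⟩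
  have hTbdd : BddBelow {t | β < t ∧ g t = g β} := ⟨β, fun s hs => hs.1.le⟩
  have haPt_ge : α' ≤ aPt g β :=
    le_trans hrmem.1 (le_csSup hSbdd ⟨by linarith [hrmem.2], hrv⟩)
  have haPt_le : aPt g β ≤ m₁ := by
    have hrS : r ∈ {t | t < β ∧ g t = g β} := ⟨by linarith [hrmem.2], hrv⟩
    rw [aPt]
    refine csSup_le ⟨r, hrS⟩ ?_
    intro s hs
    by_contra hcon
    push_neg at hcon
    exact absurd hs.2.symm (ne_of_lt (huniq s hcon (by linarith [hs.1]) (ne_of_lt hs.1)))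
  obtain ⟨_, _, hkc1, _, _, hkc2, _⟩ := key hg hβstrict
  have hcPt_ge : γ ≤ cPt g β := by
    have hcTm : cPt g β ∈ {t | β < t ∧ g t = g β} := ⟨hkc1, hkc2⟩
    rw [cPt]
    refine le_csInf ⟨cPt g β, hcTm⟩ ?_
    intro t ht
    by_contra hcon
    push_neg at hcon
    exact absurd ht.2.symm (ne_of_lt (huniq t (by linarith [ht.1]) hcon (ne_of_gt ht.1)))
  have hcPt_le : cPt g β ≤ γ' := by
    rcases lt_or_eq_of_le hvh with hl | he
    · obtain ⟨r', hr'mem, hr'v⟩ : ∃ r' ∈ Icc γ γ', g r' = g β := by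
        apply intermediate_value_Icc' hγγ'.le (gcont hg (by linarith) (by linarith))
        rw [hγ3, hγ'3]; exact ⟨hvh'.le, hl.le⟩
      exact le_trans (csInf_le hTbdd ⟨by linarith [hr'mem.1], hr'v⟩) hr'mem.2
    · exact le_trans (csInf_le hTbdd ⟨hβb, by rw [hγ3, he]⟩) hγγ'.le
  refine ⟨β, hβstrict, by linarith, by linarith, by linarith⟩
lemma laminar (hg : IsCRT g) {β β' : ℝ} (H : IsStrictLocalMin g β) (H' : IsStrictLocalMin g β')
    (hlt : g β < g β') {p : ℝ}
    (hp : p ∈ Icc (aPt g β) (cPt g β) ∩ Icc (aPt g β') (cPt g β')) :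
    Icc (aPt g β') (cPt g β') ⊆ Icc (aPt g β) (cPt g β) := by
  obtain ⟨ha0, haβ, hβc, hc1, hag, hcg, hK⟩ := key hg H
  obtain ⟨ha0', haβ', hβc', hc1', hag', hcg', hK'⟩ := key hg H'
  obtain ⟨⟨hpa, hpc⟩, ⟨hpa', hpc'⟩⟩ := hp
  have hSbdd' : BddAbove {t | t < β' ∧ g t = g β'} := ⟨β', fun s hs => hs.1.le⟩
  have hTbdd' : BddBelow {t | β' < t ∧ g t = g β'} := ⟨β', fun s hs => hs.1.le⟩
  have hge' : ∀ t, aPt g β' ≤ t → t ≤ cPt g β' → g β' ≤ g t := by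
    intro t h1 h2
    rcases eq_or_lt_of_le h1 with he | h1
    · rw [← he, hag']
    rcases eq_or_lt_of_le h2 with he | h2
    · rw [he, hcg']
    by_cases htβ : t = β'
    · rw [htβ]
    · exact (hK' t ⟨h1, h2⟩ htβ).le
  have h1 : aPt g β < β' := by
    by_contra hcon
    push_neg at hcon
    have := hge' (aPt g β) (by linarith) (by linarith)
    rw [hag] at this
    linarith
  have h2 : β' < cPt g β := by
    by_contra hcon
    push_neg at hcon
    have := hge' (cPt g β) (by linarith) (by linarith)
    rw [hcg] at this
    linarith
  obtain ⟨⟨hβ'0, hβ'1⟩, ε₂, hε₂, hst'⟩ := H'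
  have hβne : β ≠ β' := fun he => by rw [he] at hlt; exact lt_irrefl _ hlt
  -- Step 2 : aPt g β ≤ aPt g β'
  have hstep2 : aPt g β ≤ aPt g β' := by
    obtain ⟨w, hw1, hw2, hw3⟩ : ∃ w, aPt g β ≤ w ∧ w < β' ∧ g w < g β' := by
      rcases lt_or_gt_of_ne hβne with h | h
      · exact ⟨β, haβ.le, h, hlt⟩
      · exact ⟨aPt g β, le_rfl, h1, by rw [hag]; exact hlt⟩
    have hm0 : 0 < min ε₂ (β' - w) := lt_min hε₂ (by linarith)
    have hma : min ε₂ (β' - w) ≤ ε₂ := min_le_left _ _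
    have hmb : min ε₂ (β' - w) ≤ β' - w := min_le_right _ _
    have hq : g β' < g (β' - min ε₂ (β' - w)/2) :=
      hst' _ ⟨by linarith, by linarith⟩ (by intro he; nlinarith [he ▸ hm0])
    obtain ⟨s, hsmem, hsv⟩ : ∃ s ∈ Icc w (β' - min ε₂ (β' - w)/2), g s = g β' := by
      apply intermediate_value_Icc (by linarith) (gcont hg (by linarith) (by linarith))
      exact ⟨hw3.le, hq.le⟩
    have hsβ' : s < β' := by linarith [hsmem.2]
    exact le_trans hw1 (le_trans hsmem.1 (le_csSup hSbdd' ⟨hsβ', hsv⟩))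
  -- Step 3 : cPt g β' ≤ cPt g β
  have hstep3 : cPt g β' ≤ cPt g β := by
    obtain ⟨w, hw1, hw2, hw3⟩ : ∃ w, w ≤ cPt g β ∧ β' < w ∧ g w < g β' := by
      rcases lt_or_gt_of_ne hβne with h | h
      · exact ⟨cPt g β, le_rfl, h2, by rw [hcg]; exact hlt⟩
      · exact ⟨β, hβc.le, h, hlt⟩
    have hm0 : 0 < min ε₂ (w - β') := lt_min hε₂ (by linarith)
    have hma : min ε₂ (w - β') ≤ ε₂ := min_le_left _ _
    have hmb : min ε₂ (w - β') ≤ w - β' := min_le_right _ _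
    have hq : g β' < g (β' + min ε₂ (w - β')/2) :=
      hst' _ ⟨by linarith, by linarith⟩ (by intro he; nlinarith [he ▸ hm0])
    obtain ⟨s, hsmem, hsv⟩ : ∃ s ∈ Icc (β' + min ε₂ (w - β')/2) w, g s = g β' := by
      apply intermediate_value_Icc' (by linarith) (gcont hg (by linarith) (by linarith))
      exact ⟨hw3.le, hq.le⟩
    have hsβ' : β' < s := by linarith [hsmem.1]
    exact le_trans (csInf_le hTbdd' ⟨hsβ', hsv⟩) (le_trans hsmem.2 hw1)
  exact Icc_subset_Icc hstep2 hstep3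

/-- `[0,1]` can be covered, up to measure `δ`, by finitely many disjoint
subexcursion intervals of length at most `ε`. -/
theorem stmt2 (g : ℝ → ℝ) (hg : IsCRT g) (b : ℕ → ℝ) (hb : IsEnum g b)
    (δ ε : ℝ) (hδ : 0 < δ) (hε : 0 < ε) :
    ∃ I : Finset ℕ,
      (∀ i ∈ I, ∀ j ∈ I, i ≠ j →
        Set.Icc (aI g b i) (cI g b i) ∩ Set.Icc (aI g b j) (cI g b j) = ∅) ∧
      (∀ i ∈ I, cI g b i - aI g b i ≤ ε) ∧
      ENNReal.ofReal (1 - δ) < volume (⋃ i ∈ I, Set.Icc (aI g b i) (cI g b i)) := by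
  classical
  have hbstrict : ∀ i, IsStrictLocalMin g (b i) := fun i => (hb.2 (b i)).mpr ⟨i, rfl⟩
  set J : ℕ → Set ℝ := fun i => Icc (aI g b i) (cI g b i) with hJdef
  set P : ℕ → Prop := fun i => cI g b i - aI g b i ≤ ε with hPdef
  -- coverage
  have hcov : {x | NotOneSidedMin g x} ⊆ ⋃ i, ⋃ (_ : P i), J i := by
    intro x hx
    obtain ⟨β, hβs, h1, h2, h3⟩ := cover hg hx hε
    obtain ⟨i, hi⟩ := (hb.2 β).mp hβs
    have hP : P i := by rw [hPdef]; show cPt g (b i) - aPt g (b i) ≤ ε; rw [hi]; exact h3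
    refine mem_iUnion.mpr ⟨i, mem_iUnion.mpr ⟨hP, ?_⟩⟩
    show x ∈ Icc (aPt g (b i)) (cPt g (b i))
    rw [hi]
    exact ⟨h1, h2⟩
  have hvol : 1 ≤ volume (⋃ i, ⋃ (_ : P i), J i) := by
    rw [← hg.leaves_full]
    exact measure_mono hcov
  set S : ℕ → Set ℝ := fun n => ⋃ i ∈ Finset.filter P (Finset.range n), J i with hSdef
  have hmono : Monotone S := by
    intro m n hmn x hx
    simp only [hSdef, mem_iUnion, Finset.mem_filter, Finset.mem_range] at hx ⊢
    obtain ⟨i, ⟨him, hiP⟩, hxi⟩ := hx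
    exact ⟨i, ⟨lt_of_lt_of_le him hmn, hiP⟩, hxi⟩
  have hUeq : (⋃ n, S n) = ⋃ i, ⋃ (_ : P i), J i := by
    ext x
    simp only [hSdef, mem_iUnion, Finset.mem_filter, Finset.mem_range]
    constructor
    · rintro ⟨n, i, ⟨_, hiP⟩, hx⟩
      exact ⟨i, hiP, hx⟩
    · rintro ⟨i, hiP, hx⟩
      exact ⟨i + 1, i, ⟨Nat.lt_succ_self i, hiP⟩, hx⟩
  have htend := tendsto_measure_iUnion_atTop (μ := volume) hmono
  rw [hUeq] at htend
  have hlt1 : ENNReal.ofReal (1 - δ) < volume (⋃ i, ⋃ (_ : P i), J i) :=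
    lt_of_lt_of_le (lt_of_lt_of_le (ENNReal.ofReal_lt_one.mpr (by linarith)) le_rfl) hvol
  obtain ⟨n, hn⟩ := (htend.eventually (eventually_gt_nhds hlt1)).exists
  set I₀ := Finset.filter P (Finset.range n) with hI₀def
  set I := Finset.filter (fun i => ∀ j ∈ I₀, J i ⊆ J j → i = j) I₀ with hIdef
  have hII₀ : I ⊆ I₀ := Finset.filter_subset _ _
  have hlen : ∀ i ∈ I, cI g b i - aI g b i ≤ ε := fun i hi =>
    (Finset.mem_filter.mp (hII₀ hi)).2
  -- antisymmetry
  have hanti : ∀ i j : ℕ, J i ⊆ J j → J j ⊆ J i → i = j := by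
    intro i j hij hji
    obtain ⟨_, hi1, hi2, _, hi5, _, _⟩ := key hg (hbstrict i)
    obtain ⟨_, hj1, hj2, _, hj5, _, _⟩ := key hg (hbstrict j)
    have hii : aI g b i ≤ cI g b i := le_of_lt (lt_trans hi1 hi2)
    have hjj : aI g b j ≤ cI g b j := le_of_lt (lt_trans hj1 hj2)
    simp only [hJdef] at hij hji
    rw [Set.Icc_subset_Icc_iff hii] at hij
    rw [Set.Icc_subset_Icc_iff hjj] at hji
    have hae : aI g b i = aI g b j := le_antisymm hji.1 hij.1
    have hv : g (b i) = g (b j) := by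
      rw [← hi5, ← hj5]
      show g (aI g b i) = g (aI g b j)
      rw [hae]
    exact hb.1 (val_inj hg (hbstrict i) (hbstrict j) hv)
  -- every i ∈ I₀ has a maximal superset in I
  have hmax : ∀ i ∈ I₀, ∃ m ∈ I, J i ⊆ J m := by
    intro i hi
    set C := Finset.filter (fun j => J i ⊆ J j) I₀ with hCdef
    have hCne : C.Nonempty := ⟨i, Finset.mem_filter.mpr ⟨hi, subset_rfl⟩⟩
    obtain ⟨m, hmC, hmmax⟩ := C.exists_max_image (fun j => cI g b j - aI g b j) hCne
    obtain ⟨hmI₀, hmsub⟩ := Finset.mem_filter.mp hmC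
    refine ⟨m, Finset.mem_filter.mpr ⟨hmI₀, ?_⟩, hmsub⟩
    intro k hk hmk
    apply hanti m k hmk
    have hkC : k ∈ C := Finset.mem_filter.mpr ⟨hk, hmsub.trans hmk⟩
    have hlenk := hmmax k hkC
    obtain ⟨_, hm1, hm2, _, _, _, _⟩ := key hg (hbstrict m)
    have hmm : aI g b m ≤ cI g b m := le_of_lt (lt_trans hm1 hm2)
    have hmk' := hmk
    simp only [hJdef] at hmk'
    rw [Set.Icc_subset_Icc_iff hmm] at hmk'
    show Icc (aI g b k) (cI g b k) ⊆ Icc (aI g b m) (cI g b m)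
    exact Set.Icc_subset_Icc (by linarith [hmk'.1, hmk'.2]) (by linarith [hmk'.1, hmk'.2])
  -- pairwise disjointness on I
  have hdisj : ∀ i ∈ I, ∀ j ∈ I, i ≠ j → J i ∩ J j = ∅ := by
    intro i hi j hj hij
    by_contra hcon
    obtain ⟨p, hp⟩ := Set.nonempty_iff_ne_empty.mpr hcon
    have hvne : g (b i) ≠ g (b j) := fun h =>
      hij (hb.1 (val_inj hg (hbstrict i) (hbstrict j) h))
    obtain ⟨hiI₀, hicond⟩ := Finset.mem_filter.mp hi
    obtain ⟨hjI₀, hjcond⟩ := Finset.mem_filter.mp hj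
    rcases lt_or_gt_of_ne hvne with h | h
    · exact hij ((hjcond i hiI₀ (laminar hg (hbstrict i) (hbstrict j) h hp)).symm)
    · exact hij (hicond j hjI₀ (laminar hg (hbstrict j) (hbstrict i) h ⟨hp.2, hp.1⟩))
  refine ⟨I, hdisj, hlen, ?_⟩
  have hsub2 : S n ⊆ ⋃ i ∈ I, J i := by
    intro x hx
    simp only [hSdef, mem_iUnion] at hx
    obtain ⟨i, hi, hxi⟩ := hx
    obtain ⟨m, hm, hsubm⟩ := hmax i hi
    exact mem_iUnion₂.mpr ⟨m, hm, hsubm hxi⟩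
  exact lt_of_lt_of_le hn (measure_mono hsub2)

end
end

section
/- Let (g,s) be a signed excursion with the intervals [a_i,c_i] and their shuffled versions [a'_i,c'_i] (with midpoints b_i, b'_i). If [a_j,c_j] ⊆ (a_i,b_i), then s_i = ⊕ implies [a'_j,c'_j] ⊆ [a'_i,b'_i] and s_i = ⊖ implies [a'_j,c'_j] ⊆ [b'_i,c'_i]; if [a_j,c_j] ⊆ (b_i,c_i), then s_i = ⊕ implies [a'_j,c'_j] ⊆ [b'_i,c'_i] and s_i = ⊖ implies [a'_j,c'_j] ⊆ [a'_i,b'_i]. -/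
open MeasureTheory Set

noncomputable section

/-!
If `[α, γ]` is the excursion interval of `g` above a strict local minimum `β` and `x ∈ [α, γ]`,
then a point outside `[α, γ]` precedes `x` in the shuffled order iff it precedes `α` (the mrca
is the same), while no point of `[α, γ]` precedes `α`. Hence `φ(x) - φ(α)` is the measure of the
predecessors of `x` inside `[α, γ]`. For `x = a_j` these avoid `[a_j, c_j]`, and every point of
the half of `[α, γ]` not containing `a_j` has mrca `β` with `a_j`, so the sign `s_i` decides
whether all of that half precedes `a_j` or none of it does.
-/

lemma IsStrictLocalMin.isInnerLocalMin {g : ℝ → ℝ} {β : ℝ} (h : IsStrictLocalMin g β) :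
    IsInnerLocalMin g β := by
  obtain ⟨hβ, ε, hε, hlt⟩ := h
  refine ⟨hβ, ε, hε, fun x hx => ?_⟩
  rcases eq_or_ne x β with rfl | hne
  · rfl
  · exact (hlt x hx hne).le

lemma IsCRT.eq_of_isStrictLocalMin {g : ℝ → ℝ} (hg : IsCRT g) {x y : ℝ}
    (hx : IsStrictLocalMin g x) (hy : IsStrictLocalMin g y) (hxy : g x = g y) : x = y :=
  hg.distinct x y hx.isInnerLocalMin hy.isInnerLocalMin hxy

structure IsExcursionInterval (g : ℝ → ℝ) (α β γ : ℝ) : Prop where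
  nonneg : 0 ≤ α
  le_one : γ ≤ 1
  left_lt : α < β
  lt_right : β < γ
  left_eq : g α = g β
  right_eq : g γ = g β
  isStrictLocalMin : IsStrictLocalMin g β
  lt_of_ne : ∀ t ∈ Ioo α γ, t ≠ β → g β < g t

lemma aPt_spec {g : ℝ → ℝ} {l β δ : ℝ} (hcont : ContinuousOn g (Icc l β)) (hlβ : l ≤ β)
    (hl : g l < g β) (hδ : 0 < δ) (hloc : ∀ t ∈ Ioo (β - δ) β, g β < g t) :
    l < aPt g β ∧ aPt g β < β ∧ g (aPt g β) = g β ∧ ∀ t ∈ Ioo (aPt g β) β, g β < g t := by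
  set S := {t | t < β ∧ g t = g β}
  have hmid : β - δ / 2 ∈ Ioo (β - δ) β := ⟨by linarith, by linarith⟩
  have hl_mid : l < β - δ / 2 := by
    by_contra! hle
    rcases hlβ.lt_or_eq with hlt | rfl
    · exact lt_asymm hl (hloc l ⟨by linarith, hlt⟩)
    · exact lt_irrefl _ hl
  have hS_le : ∀ t ∈ S, t ≤ β - δ := fun t ht => by
    by_contra! h
    exact (hloc t ⟨h, ht.1⟩).ne' ht.2
  have hS_bdd : BddAbove S := ⟨β - δ, hS_le⟩
  have hcross : ∀ t ∈ Icc l (β - δ / 2), g t ≤ g β → ∃ t' ∈ Icc t (β - δ / 2), t' ∈ S := by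
    intro t ht hgt
    obtain ⟨t', ht', hgt'⟩ := intermediate_value_Icc ht.2
      (hcont.mono (Icc_subset_Icc ht.1 (by linarith))) ⟨hgt, (hloc _ hmid).le⟩
    exact ⟨t', ht', by linarith [ht'.2], hgt'⟩
  obtain ⟨t₀, ht₀, ht₀S⟩ := hcross l ⟨le_rfl, hl_mid.le⟩ hl.le
  have hl_lt : l < aPt g β :=
    (ht₀.1.lt_of_ne fun h => hl.ne (h ▸ ht₀S.2)).trans_le (le_csSup hS_bdd ht₀S)
  have hle : aPt g β ≤ β - δ := csSup_le ⟨t₀, ht₀S⟩ hS_le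
  have heq : g (aPt g β) = g β := by
    have hcontAt : ContinuousAt g (aPt g β) := hcont.continuousAt (Icc_mem_nhds hl_lt (by linarith))
    have hmem := hcontAt.continuousWithinAt.mem_closure_image (csSup_mem_closure ⟨t₀, ht₀S⟩ hS_bdd)
    have himg : g '' S ⊆ {g β} := by
      rintro _ ⟨t, ht, rfl⟩
      exact ht.2
    simpa using closure_mono himg hmem
  refine ⟨hl_lt, by linarith, heq, fun t ht => ?_⟩
  by_contra! hgt
  rcases le_or_gt t (β - δ / 2) with h | h
  · obtain ⟨t', ht', ht'S⟩ := hcross t ⟨hl_lt.le.trans ht.1.le, h⟩ hgt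
    exact (le_csSup hS_bdd ht'S).not_gt (ht.1.trans_le ht'.1)
  · exact (hloc t ⟨by linarith, ht.2⟩).not_ge hgt

lemma cPt_eq_neg_aPt (g : ℝ → ℝ) (β : ℝ) : cPt g β = -aPt (fun t => g (-t)) (-β) := by
  rw [cPt, aPt, ← Real.sInf_neg]
  congr 1
  ext t
  simp

lemma IsCRT.isExcursionInterval {g : ℝ → ℝ} (hg : IsCRT g) {β : ℝ} (hβ : IsStrictLocalMin g β) :
    IsExcursionInterval g (aPt g β) β (cPt g β) := by
  obtain ⟨⟨hβ0, hβ1⟩, ε, hε, hloc⟩ := id hβ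
  have hpos : 0 < g β := hg.pos β ⟨hβ0, hβ1⟩
  obtain ⟨hα0, hαβ, hgα, hleft⟩ := aPt_spec (hg.cont.mono (Icc_subset_Icc le_rfl hβ1.le))
    hβ0.le (by rwa [hg.zero0]) hε fun t ht => hloc t ⟨ht.1, by linarith [ht.2]⟩ ht.2.ne
  obtain ⟨hγ1, hγβ, hgγ, hright⟩ := aPt_spec (g := fun t => g (-t)) (l := -1) (β := -β)
    (hg.cont.comp continuousOn_neg fun t ht => ⟨by linarith [ht.2], by linarith [ht.1]⟩)
    (by linarith) (by simpa [hg.zero1] using hpos) hε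
    fun t ht => by simpa using hloc (-t) ⟨by linarith [ht.2], by linarith [ht.1]⟩ (by linarith [ht.2])
  have hγ : aPt (fun t => g (-t)) (-β) = -cPt g β := by rw [cPt_eq_neg_aPt, neg_neg]
  rw [hγ] at hγ1 hγβ hgγ hright
  simp only [neg_neg] at hgγ
  refine ⟨hα0.le, by linarith, hαβ, by linarith, hgα, hgγ, hβ, fun t ht hne => ?_⟩
  rcases hne.lt_or_gt with h | h
  · exact hleft t ⟨ht.1, h⟩
  · simpa using hright (-t) ⟨by linarith [ht.2], by linarith⟩

namespace IsMrca

variable {g : ℝ → ℝ} {β β' x y : ℝ}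

lemma lt_of_ne (h : IsMrca g β x y) {t : ℝ} (ht : t ∈ Icc x y) (hne : t ≠ β) : g β < g t :=
  (h.2.2.2.1 t ht).lt_of_ne fun heq => hne (h.2.2.2.2 t ht heq.symm)

lemma eq_of_isMrca (h : IsMrca g β x y) (h' : IsMrca g β' x y) : β' = β :=
  h.2.2.2.2 β' (Ioo_subset_Icc_self h'.2.1)
    (le_antisymm (h'.2.2.2.1 β (Ioo_subset_Icc_self h.2.1)) (h.2.2.2.1 β' (Ioo_subset_Icc_self h'.2.1)))

lemma restrict (h : IsMrca g β x y) {x' y' : ℝ} (hx : x ≤ x') (hy : y' ≤ y)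
    (hβ : β ∈ Ioo x' y') : IsMrca g β x' y' :=
  ⟨hβ.1.trans hβ.2, hβ, h.2.2.1, fun t ht => h.2.2.2.1 t ⟨hx.trans ht.1, ht.2.trans hy⟩,
    fun t ht => h.2.2.2.2 t ⟨hx.trans ht.1, ht.2.trans hy⟩⟩

lemma extend_left (h : IsMrca g β x y) {x' : ℝ} (hx : x' ≤ x)
    (hlt : ∀ t ∈ Icc x' x, g β < g t) : IsMrca g β x' y := by
  refine ⟨hx.trans_lt h.1, ⟨hx.trans_lt h.2.1.1, h.2.1.2⟩, h.2.2.1, fun t ht => ?_, fun t ht => ?_⟩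
  all_goals rcases le_or_gt x t with h' | h'
  · exact h.2.2.2.1 t ⟨h', ht.2⟩
  · exact (hlt t ⟨ht.1, h'.le⟩).le
  · exact h.2.2.2.2 t ⟨h', ht.2⟩
  · exact fun heq => absurd heq (hlt t ⟨ht.1, h'.le⟩).ne'

lemma extend_right (h : IsMrca g β x y) {y' : ℝ} (hy : y ≤ y')
    (hlt : ∀ t ∈ Icc y y', g β < g t) : IsMrca g β x y' := by
  refine ⟨h.1.trans_le hy, ⟨h.2.1.1, h.2.1.2.trans_le hy⟩, h.2.2.1, fun t ht => ?_, fun t ht => ?_⟩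
  all_goals rcases le_or_gt t y with h' | h'
  · exact h.2.2.2.1 t ⟨ht.1, h'⟩
  · exact (hlt t ⟨h'.le, ht.2⟩).le
  · exact h.2.2.2.2 t ⟨ht.1, h'⟩
  · exact fun heq => absurd heq (hlt t ⟨h'.le, ht.2⟩).ne'

end IsMrca

section Tri

variable {g : ℝ → ℝ} {b : ℕ → ℝ} {s : ℕ → Bool} {u x y : ℝ}

lemma tri_iff_of_lt (h : u < x) : Tri g b s u x ↔ ∃ i, IsMrca g (b i) u x ∧ s i = true :=
  exists_congr fun _ => or_iff_left fun hc => lt_asymm h hc.1.1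

lemma tri_iff_of_gt (h : x < u) : Tri g b s u x ↔ ∃ i, IsMrca g (b i) x u ∧ s i = false :=
  exists_congr fun _ => or_iff_right fun hc => lt_asymm h hc.1.1

lemma tri_iff_of_isMrca (hb : Function.Injective b) {i : ℕ} (h : IsMrca g (b i) x y) :
    (Tri g b s x y ↔ s i = true) ∧ (Tri g b s y x ↔ s i = false) := by
  have hmrca : ∀ l, IsMrca g (b l) x y ↔ l = i :=
    fun l => ⟨fun h' => hb (h.eq_of_isMrca h'), fun hl => hl ▸ h⟩
  simp [tri_iff_of_lt h.1, tri_iff_of_gt h.1, hmrca]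

end Tri

def precSet (g : ℝ → ℝ) (b : ℕ → ℝ) (s : ℕ → Bool) (x : ℝ) : Set ℝ :=
  {u ∈ Icc (0:ℝ) 1 | Tri g b s u x}

lemma phi_eq_measureReal (g : ℝ → ℝ) (b : ℕ → ℝ) (s : ℕ → Bool) (x : ℝ) :
    phi g b s x = volume.real (precSet g b s x) := rfl

lemma volume_precSet_ne_top (g : ℝ → ℝ) (b : ℕ → ℝ) (s : ℕ → Bool) (x : ℝ) :
    volume (precSet g b s x) ≠ ⊤ :=
  measure_ne_top_of_subset (sep_subset _ _) measure_Icc_lt_top.ne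

lemma measureReal_add_le_of_disjoint {Ω : Type*} [MeasurableSpace Ω] {μ : Measure Ω}
    {E A S : Set Ω} (hES : E ⊆ S) (hAS : A ⊆ S) (hd : Disjoint E A) (hA : MeasurableSet A)
    (hS : μ S ≠ ⊤) : μ.real E + μ.real A ≤ μ.real S := by
  rw [← measureReal_union hd hA (measure_ne_top_of_subset hES hS) (measure_ne_top_of_subset hAS hS)]
  exact measureReal_mono (union_subset hES hAS) hS

namespace IsExcursionInterval

variable {g : ℝ → ℝ} {b : ℕ → ℝ} {s : ℕ → Bool} {α β γ β' u x : ℝ}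

lemma left_lt_right (hi : IsExcursionInterval g α β γ) : α < γ :=
  hi.left_lt.trans hi.lt_right

lemma le_of_mem_Icc (hi : IsExcursionInterval g α β γ) {t : ℝ} (ht : t ∈ Icc α γ) :
    g β ≤ g t := by
  rcases eq_or_ne t β with rfl | hne
  · rfl
  rcases ht.1.eq_or_lt with rfl | h1
  · exact hi.left_eq.ge
  rcases ht.2.eq_or_lt with rfl | h2
  · exact hi.right_eq.ge
  exact (hi.lt_of_ne t ⟨h1, h2⟩ hne).le

lemma isMrca (hi : IsExcursionInterval g α β γ) (hx : x ∈ Ioo α β) {y : ℝ} (hy : y ∈ Ioo β γ) :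
    IsMrca g β x y := by
  have hsub : Icc x y ⊆ Icc α γ := Icc_subset_Icc hx.1.le hy.2.le
  refine ⟨hx.2.trans hy.1, ⟨hx.2, hy.1⟩, hi.isStrictLocalMin,
    fun t ht => hi.le_of_mem_Icc (hsub ht), fun t ht heq => ?_⟩
  by_contra hne
  have ht' : t ∈ Ioo α γ := ⟨hx.1.trans_le ht.1, ht.2.trans_lt hy.2⟩
  exact (hi.lt_of_ne t ht' hne).ne' heq

lemma lt_of_isMrca (hi : IsExcursionInterval g α β γ) {p q : ℝ} (h : IsMrca g β' p q)
    (hpq : Icc p q ⊆ Icc α γ) : g β < g p ∧ g β < g q := by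
  have hβ' := hi.le_of_mem_Icc (hpq (Ioo_subset_Icc_self h.2.1))
  exact ⟨hβ'.trans_lt (h.lt_of_ne ⟨le_rfl, h.1.le⟩ h.2.1.1.ne),
    hβ'.trans_lt (h.lt_of_ne ⟨h.1.le, le_rfl⟩ h.2.1.2.ne')⟩

lemma not_tri (hi : IsExcursionInterval g α β γ) (hu : u ∈ Icc α γ) (hx : x ∈ Icc α γ)
    (hlevel : g u = g β ∨ g x = g β) : ¬ Tri g b s u x := by
  rintro ⟨l, ⟨h, -⟩ | ⟨h, -⟩⟩
  · have := hi.lt_of_isMrca h (Icc_subset_Icc hu.1 hx.2)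
    rcases hlevel with h' | h' <;> linarith
  · have := hi.lt_of_isMrca h (Icc_subset_Icc hx.1 hu.2)
    rcases hlevel with h' | h' <;> linarith

lemma disjoint_precSet (hi : IsExcursionInterval g α β γ) :
    Disjoint (precSet g b s α) (Icc α γ) :=
  disjoint_left.2 fun _ hu hu' =>
    hi.not_tri hu' (left_mem_Icc.2 hi.left_lt_right.le) (Or.inr hi.left_eq) hu.2

/-- Otherwise `e` would be a second strict local minimum at level `g β`. -/
lemma notMem_Icc_of_isMrca (hg : IsCRT g) (hi : IsExcursionInterval g α β γ) {p q e : ℝ}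
    (h : IsMrca g β' p q) (he : e ∈ Icc p q) (hge : g e = g β) (hne : e ≠ β) :
    β' ∉ Icc α γ := by
  intro hβ'
  have hlevel : g e = g β' := le_antisymm (hge ▸ hi.le_of_mem_Icc hβ') (h.2.2.2.1 e he)
  have heβ' : e = β' := h.2.2.2.2 e he hlevel
  exact hne (hg.eq_of_isStrictLocalMin (heβ' ▸ h.2.2.1) hi.isStrictLocalMin hge)

lemma isMrca_iff_of_lt_left (hg : IsCRT g) (hi : IsExcursionInterval g α β γ)
    (hx : x ∈ Icc α γ) (hu : u < α) : IsMrca g β' u x ↔ IsMrca g β' u α := by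
  constructor
  · intro h
    have hnot := hi.notMem_Icc_of_isMrca hg h ⟨hu.le, hx.1⟩ hi.left_eq hi.left_lt.ne
    have hβ' : β' < α := by
      by_contra! hle
      exact hnot ⟨hle, h.2.1.2.le.trans hx.2⟩
    exact h.restrict le_rfl hx.1 ⟨h.2.1.1, hβ'⟩
  · intro h
    have hlt : g β' < g α := h.lt_of_ne ⟨hu.le, le_rfl⟩ h.2.1.2.ne'
    exact h.extend_right hx.1 fun t ht =>
      hlt.trans_le (hi.left_eq ▸ hi.le_of_mem_Icc ⟨ht.1, ht.2.trans hx.2⟩)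

lemma isMrca_iff_of_right_lt (hg : IsCRT g) (hi : IsExcursionInterval g α β γ)
    (hx : x ∈ Icc α γ) (hu : γ < u) : IsMrca g β' x u ↔ IsMrca g β' γ u := by
  constructor
  · intro h
    have hnot := hi.notMem_Icc_of_isMrca hg h ⟨hx.2, hu.le⟩ hi.right_eq hi.lt_right.ne'
    have hβ' : γ < β' := by
      by_contra! hle
      exact hnot ⟨hx.1.trans h.2.1.1.le, hle⟩
    exact h.restrict hx.2 le_rfl ⟨hβ', h.2.1.2⟩
  · intro h
    have hlt : g β' < g γ := h.lt_of_ne ⟨le_rfl, hu.le⟩ h.2.1.1.ne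
    exact h.extend_left hx.2 fun t ht =>
      hlt.trans_le (hi.right_eq ▸ hi.le_of_mem_Icc ⟨hx.1.trans ht.1, ht.2⟩)

lemma tri_iff_of_notMem (hg : IsCRT g) (hi : IsExcursionInterval g α β γ) (hx : x ∈ Icc α γ)
    (hu : u ∉ Icc α γ) : Tri g b s u x ↔ Tri g b s u α := by
  have hα : α ∈ Icc α γ := left_mem_Icc.2 hi.left_lt_right.le
  rcases not_and_or.1 hu with hu | hu <;> push Not at hu
  · rw [tri_iff_of_lt (hu.trans_le hx.1), tri_iff_of_lt hu]
    simp only [hi.isMrca_iff_of_lt_left hg hx hu]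
  · rw [tri_iff_of_gt (hx.2.trans_lt hu), tri_iff_of_gt (hα.2.trans_lt hu)]
    simp only [hi.isMrca_iff_of_right_lt hg hx hu, hi.isMrca_iff_of_right_lt hg hα hu]

/-- Outside the excursion interval `x` and `α` have the same predecessors, and none of the
predecessors of `α` lie inside it. -/
lemma phi_eq_add (hg : IsCRT g) (hi : IsExcursionInterval g α β γ) (hx : x ∈ Icc α γ) :
    phi g b s x = phi g b s α + volume.real (precSet g b s x ∩ Icc α γ) := by
  have hdiff : precSet g b s x \ Icc α γ = precSet g b s α := by
    ext u
    refine ⟨fun ⟨⟨hu, ht⟩, hnot⟩ => ⟨hu, (hi.tri_iff_of_notMem hg hx hnot).1 ht⟩, fun hu => ?_⟩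
    have hnot : u ∉ Icc α γ := disjoint_left.1 hi.disjoint_precSet hu
    exact ⟨⟨hu.1, (hi.tri_iff_of_notMem hg hx hnot).2 hu.2⟩, hnot⟩
  rw [phi_eq_measureReal, phi_eq_measureReal, ← hdiff]
  exact (measureReal_sdiff_add_inter measurableSet_Icc (volume_precSet_ne_top g b s x)).symm

end IsExcursionInterval

section Nesting

variable {g : ℝ → ℝ} {b : ℕ → ℝ} {s : ℕ → Bool} {i j : ℕ}

lemma shuffled_subset_of_subset_left (hg : IsCRT g) (hb : Function.Injective b)
    (hi : IsExcursionInterval g (aI g b i) (b i) (cI g b i))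
    (hj : IsExcursionInterval g (aI g b j) (b j) (cI g b j))
    (h : Icc (aI g b j) (cI g b j) ⊆ Ioo (aI g b i) (b i)) :
    (s i = true → Icc (aI' g b s j) (cI' g b s j) ⊆ Icc (aI' g b s i) (bI' g b s i)) ∧
    (s i = false → Icc (aI' g b s j) (cI' g b s j) ⊆ Icc (bI' g b s i) (cI' g b s i)) := by
  have hj_le : aI g b j ≤ cI g b j := hj.left_lt_right.le
  have hαj := h (left_mem_Icc.2 hj_le)
  have hγj := h (right_mem_Icc.2 hj_le)
  set E := precSet g b s (aI g b j) ∩ Icc (aI g b i) (cI g b i)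
  have hphi : aI' g b s j = aI' g b s i + volume.real E :=
    hi.phi_eq_add hg ⟨hαj.1.le, hαj.2.le.trans hi.lt_right.le⟩
  have hdisj : Disjoint E (Icc (aI g b j) (cI g b j)) := hj.disjoint_precSet.mono_left inter_subset_left
  have hfar : ∀ u ∈ Ioo (b i) (cI g b i), Tri g b s u (aI g b j) ↔ s i = false :=
    fun u hu => (tri_iff_of_isMrca hb (hi.isMrca hαj hu)).2
  have hE_nonneg : 0 ≤ volume.real E := measureReal_nonneg
  simp only [bI', cI', hphi]
  constructor
  · intro hsi
    have hE : E ⊆ Icc (aI g b i) (b i) := by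
      rintro u ⟨⟨-, hu⟩, hui⟩
      refine ⟨hui.1, not_lt.1 fun hlt => ?_⟩
      rcases hui.2.lt_or_eq with hlt' | rfl
      · simp [(hfar u ⟨hlt, hlt'⟩).1 hu] at hsi
      · exact hi.not_tri hui ⟨hαj.1.le, hαj.2.le.trans hi.lt_right.le⟩ (Or.inl hi.right_eq) hu
    have hbound := measureReal_add_le_of_disjoint (μ := volume) hE (Icc_subset_Icc hαj.1.le hγj.2.le) hdisj
      measurableSet_Icc measure_Icc_lt_top.ne
    rw [Real.volume_real_Icc_of_le hj_le, Real.volume_real_Icc_of_le hi.left_lt.le] at hbound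
    simp only [hsi, if_true]
    exact Icc_subset_Icc (by linarith) (by linarith)
  · intro hsi
    have hlower : volume.real (Ioo (b i) (cI g b i)) ≤ volume.real E := by
      refine measureReal_mono (fun u hu => ⟨⟨⟨?_, ?_⟩, (hfar u hu).2 hsi⟩, ?_⟩)
        (measure_ne_top_of_subset inter_subset_right measure_Icc_lt_top.ne)
      · linarith [hi.nonneg, hi.left_lt, hu.1]
      · linarith [hi.le_one, hu.2]
      · exact ⟨by linarith [hi.left_lt, hu.1], hu.2.le⟩
    have hbound := measureReal_add_le_of_disjoint (μ := volume) inter_subset_right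
      (Icc_subset_Icc hαj.1.le (hγj.2.le.trans hi.lt_right.le)) hdisj measurableSet_Icc
      measure_Icc_lt_top.ne
    rw [Real.volume_real_Ioo_of_le hi.lt_right.le] at hlower
    rw [Real.volume_real_Icc_of_le hj_le,
      Real.volume_real_Icc_of_le hi.left_lt_right.le] at hbound
    simp only [hsi, Bool.false_eq_true, if_false]
    exact Icc_subset_Icc (by linarith) (by linarith)

lemma shuffled_subset_of_subset_right (hg : IsCRT g) (hb : Function.Injective b)
    (hi : IsExcursionInterval g (aI g b i) (b i) (cI g b i))
    (hj : IsExcursionInterval g (aI g b j) (b j) (cI g b j))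
    (h : Icc (aI g b j) (cI g b j) ⊆ Ioo (b i) (cI g b i)) :
    (s i = true → Icc (aI' g b s j) (cI' g b s j) ⊆ Icc (bI' g b s i) (cI' g b s i)) ∧
    (s i = false → Icc (aI' g b s j) (cI' g b s j) ⊆ Icc (aI' g b s i) (bI' g b s i)) := by
  have hj_le : aI g b j ≤ cI g b j := hj.left_lt_right.le
  have hαj := h (left_mem_Icc.2 hj_le)
  have hγj := h (right_mem_Icc.2 hj_le)
  set E := precSet g b s (aI g b j) ∩ Icc (aI g b i) (cI g b i)
  have hphi : aI' g b s j = aI' g b s i + volume.real E :=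
    hi.phi_eq_add hg ⟨hi.left_lt.le.trans hαj.1.le, hαj.2.le⟩
  have hdisj : Disjoint E (Icc (aI g b j) (cI g b j)) := hj.disjoint_precSet.mono_left inter_subset_left
  have hnear : ∀ u ∈ Ioo (aI g b i) (b i), Tri g b s u (aI g b j) ↔ s i = true :=
    fun u hu => (tri_iff_of_isMrca hb (hi.isMrca hu hαj)).1
  have hE_nonneg : 0 ≤ volume.real E := measureReal_nonneg
  simp only [bI', cI', hphi]
  constructor
  · intro hsi
    have hlower : volume.real (Ioo (aI g b i) (b i)) ≤ volume.real E := by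
      refine measureReal_mono (fun u hu => ⟨⟨⟨?_, ?_⟩, (hnear u hu).2 hsi⟩, ?_⟩)
        (measure_ne_top_of_subset inter_subset_right measure_Icc_lt_top.ne)
      · linarith [hi.nonneg, hu.1]
      · linarith [hi.le_one, hi.lt_right, hu.2]
      · exact ⟨hu.1.le, by linarith [hi.lt_right, hu.2]⟩
    have hbound := measureReal_add_le_of_disjoint (μ := volume) inter_subset_right
      (Icc_subset_Icc (hi.left_lt.le.trans hαj.1.le) hγj.2.le) hdisj measurableSet_Icc
      measure_Icc_lt_top.ne
    rw [Real.volume_real_Ioo_of_le hi.left_lt.le] at hlower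
    rw [Real.volume_real_Icc_of_le hj_le,
      Real.volume_real_Icc_of_le hi.left_lt_right.le] at hbound
    simp only [hsi, if_true]
    exact Icc_subset_Icc (by linarith) (by linarith)
  · intro hsi
    have hE : E ⊆ Icc (b i) (cI g b i) := by
      rintro u ⟨⟨-, hu⟩, hui⟩
      refine ⟨not_lt.1 fun hlt => ?_, hui.2⟩
      rcases hui.1.lt_or_eq with hlt' | rfl
      · simp [(hnear u ⟨hlt', hlt⟩).1 hu] at hsi
      · exact hi.not_tri hui ⟨hi.left_lt.le.trans hαj.1.le, hαj.2.le⟩ (Or.inl hi.left_eq) hu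
    have hbound := measureReal_add_le_of_disjoint (μ := volume) hE (Icc_subset_Icc hαj.1.le hγj.2.le) hdisj
      measurableSet_Icc measure_Icc_lt_top.ne
    rw [Real.volume_real_Icc_of_le hj_le, Real.volume_real_Icc_of_le hi.lt_right.le] at hbound
    simp only [hsi, Bool.false_eq_true, if_false]
    exact Icc_subset_Icc (by linarith) (by linarith)

end Nesting

/-- Nesting of the shuffled intervals according to the sign at the ancestor. -/
theorem stmt5 (g : ℝ → ℝ) (hg : IsCRT g) (b : ℕ → ℝ) (hb : IsEnum g b) (s : ℕ → Bool)
    (i j : ℕ) :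
    (Set.Icc (aI g b j) (cI g b j) ⊆ Set.Ioo (aI g b i) (b i) →
      (s i = true → Set.Icc (aI' g b s j) (cI' g b s j) ⊆ Set.Icc (aI' g b s i) (bI' g b s i)) ∧
      (s i = false → Set.Icc (aI' g b s j) (cI' g b s j) ⊆ Set.Icc (bI' g b s i) (cI' g b s i))) ∧
    (Set.Icc (aI g b j) (cI g b j) ⊆ Set.Ioo (b i) (cI g b i) →
      (s i = true → Set.Icc (aI' g b s j) (cI' g b s j) ⊆ Set.Icc (bI' g b s i) (cI' g b s i)) ∧
      (s i = false → Set.Icc (aI' g b s j) (cI' g b s j) ⊆ Set.Icc (aI' g b s i) (bI' g b s i))) := by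
  have hexc : ∀ k, IsExcursionInterval g (aI g b k) (b k) (cI g b k) :=
    fun k => hg.isExcursionInterval ((hb.2 (b k)).2 ⟨k, rfl⟩)
  exact ⟨shuffled_subset_of_subset_left hg hb.1 (hexc i) (hexc j),
    shuffled_subset_of_subset_right hg hb.1 (hexc i) (hexc j)⟩
end
end
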